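/- If N is a Midy pseudoprime to base b, then N is a strong pseudoprime to base b. -/

import Mathlib

/-- The multiplicative order of `b` modulo `N`. -/
noncomputable def ord (b N : ℕ) : ℕ := orderOf (b : ZMod N)

/-- `N` is a Midy pseudoprime to base `b`: `N` is odd composite, coprime to `b` and to
`|b|_N`, and `|b|_N = |b|_p` for every prime `p ∣ N` (equivalent characterization). -/
def MidyPsp (b N : ℕ) : Prop :=
  Odd N ∧ 1 < N ∧ ¬ N.Prime ∧ Nat.Coprime N b ∧ Nat.Coprime N (ord b N) ∧
    ∀ p : ℕ, p.Prime → p ∣ N → ord b N = ord b p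

/-- `N` is a strong pseudoprime to base `b`: `N` is odd composite, coprime to `b`, and,
writing `N − 1 = 2^r·s` with `s` odd, `b^s ≡ 1 (mod N)` or `b^{2^i·s} ≡ −1 (mod N)`
for some `0 ≤ i < r`. -/
def StrongPsp (b N : ℕ) : Prop :=
  Odd N ∧ 1 < N ∧ ¬ N.Prime ∧ Nat.Coprime N b ∧
    (b ^ ((N - 1) / 2 ^ padicValNat 2 (N - 1)) ≡ 1 [MOD N] ∨
      ∃ i < padicValNat 2 (N - 1),
        (b : ZMod N) ^ (2 ^ i * ((N - 1) / 2 ^ padicValNat 2 (N - 1))) = -1)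

/-!
Let `d = |b|_N`. Since `d = |b|_p` divides `p - 1` for every prime `p ∣ N`, we get `N ≡ 1 (mod d)`,
so `d ∣ N - 1 = 2^r s`. Either `d ∣ s`, and then `b^s ≡ 1`, or there is `i < r` with
`d ∤ 2^i s` but `d ∣ 2^(i+1) s`. In the latter case `y = b^(2^i s)` satisfies `y² ≡ 1 (mod N)`,
while `y ≢ 1` modulo every prime factor `p` of `N` because `|b|_p = d`; hence `N` is coprime to
`y - 1` and divides `y + 1`.
-/

theorem Nat.modEq_one_of_forall_prime_dvd {n d : ℕ} (hn : n ≠ 0)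
    (h : ∀ p, p.Prime → p ∣ n → p ≡ 1 [MOD d]) : n ≡ 1 [MOD d] := by
  rw [← ZMod.natCast_eq_natCast_iff, ← Nat.prod_primeFactorsList hn, Nat.cast_list_prod,
    Nat.cast_one]
  refine List.prod_eq_one (M := ZMod d) fun x hx => ?_
  obtain ⟨p, hp, rfl⟩ := List.mem_map.mp hx
  exact_mod_cast (ZMod.natCast_eq_natCast_iff _ _ _).mpr
    (h p (Nat.prime_of_mem_primeFactorsList hp) (Nat.dvd_of_mem_primeFactorsList hp))

theorem ZMod.intCast_eq_neg_one_of_sq_eq_one {N : ℕ} {x : ℤ} (hsq : (x : ZMod N) ^ 2 = 1)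
    (hx : ∀ p : ℕ, p.Prime → p ∣ N → (x : ZMod p) ≠ 1) : (x : ZMod N) = -1 := by
  have hcop : IsCoprime (N : ℤ) (x - 1) := by
    rw [Int.isCoprime_iff_gcd_eq_one]
    refine Nat.coprime_of_dvd fun p hp hpN hpx => hx p hp (by simpa using hpN) ?_
    rw [← sub_eq_zero, ← Int.cast_one, ← Int.cast_sub, ZMod.intCast_zmod_eq_zero_iff_dvd]
    exact Int.ofNat_dvd_left.mpr hpx
  have hdvd : (N : ℤ) ∣ (x - 1) * (x + 1) := by
    rw [← ZMod.intCast_zmod_eq_zero_iff_dvd]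
    push_cast
    linear_combination hsq
  rw [eq_neg_iff_add_eq_zero]
  exact_mod_cast (ZMod.intCast_zmod_eq_zero_iff_dvd _ _).mpr (hcop.dvd_of_dvd_mul_left hdvd)

theorem dvd_or_exists_not_dvd_pow_mul_dvd_pow_succ_mul {M : Type*} [Monoid M] {d a s : M} :
    ∀ {r : ℕ}, d ∣ a ^ r * s → d ∣ s ∨ ∃ i < r, ¬ d ∣ a ^ i * s ∧ d ∣ a ^ (i + 1) * s
  | 0, h => .inl (by rwa [pow_zero, one_mul] at h)
  | r + 1, h => by
    by_cases hr : d ∣ a ^ r * s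
    · rcases dvd_or_exists_not_dvd_pow_mul_dvd_pow_succ_mul hr with hs | ⟨i, hi, hni, hdi⟩
      · exact .inl hs
      · exact .inr ⟨i, hi.trans r.lt_succ_self, hni, hdi⟩
    · exact .inr ⟨r, r.lt_succ_self, hr, h⟩

theorem pow_eq_one_iff_ord_dvd (b m n : ℕ) : (b : ZMod m) ^ n = 1 ↔ ord b m ∣ n :=
  orderOf_dvd_iff_pow_eq_one.symm

theorem ord_dvd_prime_sub_one {b p : ℕ} (hp : p.Prime) (hb : ¬ p ∣ b) : ord b p ∣ p - 1 := by
  have := Fact.mk hp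
  exact ZMod.orderOf_dvd_card_sub_one (by rwa [Ne, ZMod.natCast_eq_zero_iff])

theorem MidyPsp.ord_dvd_sub_one {b N : ℕ} (h : MidyPsp b N) : ord b N ∣ N - 1 := by
  obtain ⟨-, hN, -, hcop, -, hord⟩ := h
  refine (Nat.modEq_iff_dvd' hN.le).mp
    (Nat.modEq_one_of_forall_prime_dvd (by omega) fun p hp hpN => ?_).symm
  have hpb : ¬ p ∣ b := fun hpb => hp.one_lt.ne' (Nat.eq_one_of_dvd_coprimes hcop hpN hpb)
  rw [hord p hp hpN]
  exact ((Nat.modEq_iff_dvd' hp.one_le).mpr (ord_dvd_prime_sub_one hp hpb)).symm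

theorem stmt17 (b N : ℕ) (h : MidyPsp b N) : StrongPsp b N := by
  set r := padicValNat 2 (N - 1)
  set s := (N - 1) / 2 ^ r
  have hNs : 2 ^ r * s = N - 1 := Nat.mul_div_cancel' pow_padicValNat_dvd
  have hdvd : ord b N ∣ 2 ^ r * s := hNs ▸ h.ord_dvd_sub_one
  obtain ⟨hodd, hN, hnp, hcop, -, hord⟩ := h
  refine ⟨hodd, hN, hnp, hcop, ?_⟩
  rcases dvd_or_exists_not_dvd_pow_mul_dvd_pow_succ_mul hdvd with hs | ⟨i, hir, hni, hdi⟩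
  · left
    rw [← ZMod.natCast_eq_natCast_iff, Nat.cast_pow, Nat.cast_one, pow_eq_one_iff_ord_dvd]
    exact hs
  · right
    refine ⟨i, hir, ?_⟩
    have hsq : (((b : ℤ) ^ (2 ^ i * s) : ℤ) : ZMod N) ^ 2 = 1 := by
      push_cast
      rwa [← pow_mul, pow_eq_one_iff_ord_dvd, mul_right_comm, ← pow_succ]
    have hne : ∀ p : ℕ, p.Prime → p ∣ N → (((b : ℤ) ^ (2 ^ i * s) : ℤ) : ZMod p) ≠ 1 := by
      intro p hp hpN
      push_cast
      rwa [Ne, pow_eq_one_iff_ord_dvd, ← hord p hp hpN]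
    exact_mod_cast ZMod.intCast_eq_neg_one_of_sq_eq_one hsq hne
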